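/- arXiv:2505.15009 — 5 statements merged into one kernel-verified Lean document; each statement's English description precedes it below -/
import Mathlib

section
/- Zero-loss iterated limit for softmax attention in the noiseless setting (Lemma 2, reduced form): Let H > 0 and A, B be reals with 1 ≤ A ≤ B ≤ H, let J be a finite index set and C_j ∈ [0, H] for each j ∈ J. Define D(λ) = A e^λ + (H − A) e^{−λ}, ξ_y(s, λ) = s (A e^λ + (B − A) e^{−λ}) / D(λ), and ξ_j(s, λ) = s C_j e^{−λ} / D(λ) for j ∈ J, and the loss ℓ(s, λ) = −ξ_y(s,λ) + ln( exp(ξ_y(s,λ)) + Σ_{j∈J} exp(ξ_j(s,λ)) ). Then for every fixed s ∈ ℝ, lim_{λ→∞} ℓ(s, λ) = ln(1 + |J| e^{−s}), and consequently lim_{s→∞} lim_{λ→∞} ℓ(s, λ) = 0. -/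
/-!
As `λ → ∞` the `e^λ` terms dominate every numerator and denominator, so the logit of the output
token tends to `s` and every other logit tends to `0`. By continuity of log-sum-exp the loss tends
to `-s + ln (e^s + |J|) = ln (1 + |J| e^{-s})`, which tends to `ln 1 = 0` as `s → ∞`.
-/

open Filter Real Topology

theorem tendsto_exp_quotient_atTop (a b d : ℝ) {c : ℝ} (hc : c ≠ 0) :
    Tendsto (fun t => (a * exp t + b * exp (-t)) / (c * exp t + d * exp (-t))) atTop
      (𝓝 (a / c)) := by
  -- multiplying through by `u = e^{-t}` gives a rational function of `u`, continuous at `u = 0`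
  set g : ℝ → ℝ := fun u => (a + b * u ^ 2) / (c + d * u ^ 2)
  have hg : ContinuousAt g 0 := by
    refine ContinuousAt.div (by fun_prop) (by fun_prop) ?_
    simpa using hc
  have hg₀ : g 0 = a / c := by simp [g]
  refine (hg₀ ▸ hg.tendsto.comp tendsto_exp_neg_atTop_nhds_zero).congr fun t => ?_
  have hexp : exp (-t) * exp t = 1 := by rw [← exp_add]; simp
  simp only [Function.comp_apply, g]
  rw [← mul_div_mul_left (a * exp t + _) _ (exp_ne_zero (-t))]
  congr 1
  · linear_combination -a * hexp
  · linear_combination -c * hexp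

theorem neg_add_log_exp_add {c : ℝ} (hc : 0 ≤ c) (x : ℝ) :
    -x + log (exp x + c) = log (1 + c * exp (-x)) := by
  have hfactor : exp x + c = exp x * (1 + c * exp (-x)) := by
    rw [mul_add, mul_one, mul_left_comm, ← exp_add, add_neg_cancel, exp_zero, mul_one]
  rw [hfactor, log_mul (exp_ne_zero x) (by positivity), log_exp]
  ring

theorem tendsto_neg_add_log_exp_add_sum_exp {α ι : Type*} [Fintype ι] {l : Filter α}
    {x : α → ℝ} {y : ι → α → ℝ} {x₀ : ℝ} (hx : Tendsto x l (𝓝 x₀))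
    (hy : ∀ i, Tendsto (y i) l (𝓝 0)) :
    Tendsto (fun a => -x a + log (exp (x a) + ∑ i, exp (y i a))) l
      (𝓝 (log (1 + Fintype.card ι * exp (-x₀)))) := by
  have hsum : Tendsto (fun a => ∑ i, exp (y i a)) l (𝓝 (Fintype.card ι)) := by
    simpa using tendsto_finsetSum Finset.univ fun i _ => (hy i).rexp
  have hpos : exp x₀ + Fintype.card ι ≠ 0 := by positivity
  rw [← neg_add_log_exp_add (Nat.cast_nonneg _)]
  exact hx.neg.add ((hx.rexp.add hsum).log hpos)

theorem stmt_8_general (H A B : ℝ) (hA : 1 ≤ A)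
    {J : Type*} [Fintype J] (C : J → ℝ) :
    (∀ s : ℝ,
      Filter.Tendsto (fun lam : ℝ =>
          -(s * (A * Real.exp lam + (B - A) * Real.exp (-lam)) /
              (A * Real.exp lam + (H - A) * Real.exp (-lam))) +
          Real.log
            (Real.exp (s * (A * Real.exp lam + (B - A) * Real.exp (-lam)) /
                (A * Real.exp lam + (H - A) * Real.exp (-lam))) +
              ∑ j : J, Real.exp (s * C j * Real.exp (-lam) /
                (A * Real.exp lam + (H - A) * Real.exp (-lam)))))
        Filter.atTop
        (nhds (Real.log (1 + (Fintype.card J : ℝ) * Real.exp (-s))))) ∧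
    Filter.Tendsto (fun s : ℝ => Real.log (1 + (Fintype.card J : ℝ) * Real.exp (-s)))
      Filter.atTop (nhds 0) := by
  have hA₀ : A ≠ 0 := by positivity
  refine ⟨fun s => tendsto_neg_add_log_exp_add_sum_exp ?output fun j => ?other, ?outer⟩
  case output =>
    simpa [mul_div_assoc, hA₀] using
      (tendsto_exp_quotient_atTop A (B - A) (H - A) hA₀).const_mul s
  case other =>
    simpa using tendsto_exp_quotient_atTop 0 (s * C j) (H - A) hA₀
  case outer =>
    have hinner : Tendsto (fun s => 1 + (Fintype.card J : ℝ) * exp (-s)) atTop (𝓝 1) := by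
      simpa using (tendsto_exp_neg_atTop_nhds_zero.const_mul (Fintype.card J : ℝ)).const_add 1
    simpa using hinner.log one_ne_zero

/-- Zero-loss iterated limit for softmax attention in the noiseless setting
(Lemma 2, reduced form): for fixed `s`, the per-sentence loss tends to
`ln(1 + |J| e^{−s})` as `λ → ∞`, and this inner limit tends to `0` as `s → ∞`. -/
theorem stmt_8 (H A B : ℝ) (hH : 0 < H) (hA : 1 ≤ A) (hAB : A ≤ B) (hBH : B ≤ H)
    {J : Type*} [Fintype J] (C : J → ℝ) (hC : ∀ j, C j ∈ Set.Icc (0 : ℝ) H) :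
    (∀ s : ℝ,
      Filter.Tendsto (fun lam : ℝ =>
          -(s * (A * Real.exp lam + (B - A) * Real.exp (-lam)) /
              (A * Real.exp lam + (H - A) * Real.exp (-lam))) +
          Real.log
            (Real.exp (s * (A * Real.exp lam + (B - A) * Real.exp (-lam)) /
                (A * Real.exp lam + (H - A) * Real.exp (-lam))) +
              ∑ j : J, Real.exp (s * C j * Real.exp (-lam) /
                (A * Real.exp lam + (H - A) * Real.exp (-lam)))))
        Filter.atTop
        (nhds (Real.log (1 + (Fintype.card J : ℝ) * Real.exp (-s))))) ∧
    Filter.Tendsto (fun s : ℝ => Real.log (1 + (Fintype.card J : ℝ) * Real.exp (-s)))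
      Filter.atTop (nhds 0) :=
  stmt_8_general H A B hA C
end

section
/- Monotone decrease of the softmax-attention loss in the attention parameter (Theorem 4, phase-two gradient sign in λ): Let H, A, B be reals with 1 ≤ A ≤ B < H, let I be a nonempty finite index set and C_i ∈ [0, H) for each i ∈ I. Define g(x) = A e^{2x} + H − A, u(x) = A e^{2x} + B − A, and f(s, x) = −s·u(x)/g(x) + ln( exp(s·u(x)/g(x)) + Σ_{i∈I} exp(s·C_i/g(x)) ). Then for every fixed s > 0, the map x ↦ f(s, x) is strictly decreasing on ℝ (its partial derivative in x is strictly negative everywhere). -/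
/-- Monotone decrease of the softmax-attention loss in the attention parameter
(Theorem 4, phase-two gradient sign in `λ`): for fixed `s > 0`, the map
`x ↦ f(s, x)` is strictly decreasing on `ℝ`. -/
theorem stmt_9 (H A B : ℝ) (hA : 1 ≤ A) (hAB : A ≤ B) (hBH : B < H)
    {I : Type*} [Fintype I] [Nonempty I] (C : I → ℝ)
    (hC : ∀ i, C i ∈ Set.Ico (0 : ℝ) H)
    (s : ℝ) (hs : 0 < s) :
    StrictAnti (fun x : ℝ =>
      -(s * ((A * Real.exp (2 * x) + B - A) / (A * Real.exp (2 * x) + H - A))) +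
      Real.log
        (Real.exp (s * ((A * Real.exp (2 * x) + B - A) / (A * Real.exp (2 * x) + H - A))) +
          ∑ i : I, Real.exp (s * C i / (A * Real.exp (2 * x) + H - A)))) := by
  have hApos : (0:ℝ) < A := lt_of_lt_of_le one_pos hA
  have hHA : 0 < H - A := by linarith
  have hgpos : ∀ z : ℝ, 0 < A * Real.exp (2 * z) + H - A := by
    intro z
    have := Real.exp_pos (2 * z)
    nlinarith
  -- key rewriting: f z = log (1 + ∑ exp (s*(C i + H - B)/g z - s))
  have key : ∀ z : ℝ,
      (-(s * ((A * Real.exp (2 * z) + B - A) / (A * Real.exp (2 * z) + H - A))) +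
        Real.log
          (Real.exp (s * ((A * Real.exp (2 * z) + B - A) / (A * Real.exp (2 * z) + H - A))) +
            ∑ i : I, Real.exp (s * C i / (A * Real.exp (2 * z) + H - A)))) =
      Real.log (1 + ∑ i : I, Real.exp (s * (C i + H - B) / (A * Real.exp (2 * z) + H - A) - s)) := by
    intro z
    set g := A * Real.exp (2 * z) + H - A with hg
    have hgp : 0 < g := hgpos z
    have hgne : g ≠ 0 := ne_of_gt hgp
    set a := s * ((A * Real.exp (2 * z) + B - A) / g) with ha
    have hsplit : Real.exp a + ∑ i : I, Real.exp (s * C i / g) =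
        Real.exp a * (1 + ∑ i : I, Real.exp (s * (C i + H - B) / g - s)) := by
      rw [mul_add, mul_one, Finset.mul_sum]
      congr 1
      refine Finset.sum_congr rfl fun i _ => ?_
      rw [← Real.exp_add]
      congr 1
      rw [ha]
      field_simp
      ring
    have hPpos : 0 < 1 + ∑ i : I, Real.exp (s * (C i + H - B) / g - s) := by
      have : 0 ≤ ∑ i : I, Real.exp (s * (C i + H - B) / g - s) :=
        Finset.sum_nonneg fun i _ => (Real.exp_pos _).le
      linarith
    rw [hsplit, Real.log_mul (Real.exp_ne_zero _) (ne_of_gt hPpos), Real.log_exp]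
    ring
  intro x y hxy
  simp only []
  rw [key x, key y]
  have hgxy : A * Real.exp (2 * x) + H - A < A * Real.exp (2 * y) + H - A := by
    have : Real.exp (2 * x) < Real.exp (2 * y) := Real.exp_lt_exp.2 (by linarith)
    nlinarith
  have hsum : ∀ i : I,
      Real.exp (s * (C i + H - B) / (A * Real.exp (2 * y) + H - A) - s) <
      Real.exp (s * (C i + H - B) / (A * Real.exp (2 * x) + H - A) - s) := by
    intro i
    have hnum : 0 < s * (C i + H - B) := by
      have := (hC i).1
      have : 0 < C i + H - B := by linarith [(hC i).1]
      exact mul_pos hs this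
    have := div_lt_div_of_pos_left hnum (hgpos x) hgxy
    exact Real.exp_lt_exp.2 (by linarith)
  have hlt : (1 + ∑ i : I, Real.exp (s * (C i + H - B) / (A * Real.exp (2 * y) + H - A) - s)) <
      (1 + ∑ i : I, Real.exp (s * (C i + H - B) / (A * Real.exp (2 * x) + H - A) - s)) := by
    have := Finset.sum_lt_sum_of_nonempty (Finset.univ_nonempty (α := I))
      (fun i _ => hsum i)
    linarith
  have hpos : 0 < 1 + ∑ i : I, Real.exp (s * (C i + H - B) / (A * Real.exp (2 * y) + H - A) - s) := by
    have : 0 ≤ ∑ i : I, Real.exp (s * (C i + H - B) / (A * Real.exp (2 * y) + H - A) - s) :=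
      Finset.sum_nonneg fun i _ => (Real.exp_pos _).le
    linarith
  exact Real.log_lt_log hpos hlt
end

section
/- Monotone decrease of the softmax-attention loss in the value-scale parameter (Theorem 4, phase-two gradient sign in s): Let H, A, B be reals with 1 ≤ A ≤ B < H, let I be a nonempty finite index set and C_i ∈ [0, H) for each i ∈ I. Define g(x) = A e^{2x} + H − A, u(x) = A e^{2x} + B − A, and f(s, x) = −s·u(x)/g(x) + ln( exp(s·u(x)/g(x)) + Σ_{i∈I} exp(s·C_i/g(x)) ). Then for every fixed x ≥ (ln H)/2, the map s ↦ f(s, x) is strictly decreasing on ℝ (its partial derivative in s is strictly negative), since A e^{2x} + B − A − C_i > 0 for all i ∈ I whenever A e^{2x} ≥ H. -/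
/-- Monotone decrease of the softmax-attention loss in the value-scale parameter
(Theorem 4, phase-two gradient sign in `s`): for fixed `x ≥ (ln H)/2`, the map
`s ↦ f(s, x)` is strictly decreasing on `ℝ`. -/
theorem stmt_10 (H A B : ℝ) (hA : 1 ≤ A) (hAB : A ≤ B) (hBH : B < H)
    {I : Type*} [Fintype I] [Nonempty I] (C : I → ℝ)
    (hC : ∀ i, C i ∈ Set.Ico (0 : ℝ) H)
    (x : ℝ) (hx : Real.log H / 2 ≤ x) :
    StrictAnti (fun s : ℝ =>
      -(s * ((A * Real.exp (2 * x) + B - A) / (A * Real.exp (2 * x) + H - A))) +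
      Real.log
        (Real.exp (s * ((A * Real.exp (2 * x) + B - A) / (A * Real.exp (2 * x) + H - A))) +
          ∑ i : I, Real.exp (s * C i / (A * Real.exp (2 * x) + H - A)))) := by
  set E := Real.exp (2 * x) with hE
  have hH0 : (0:ℝ) < H := by linarith
  have hEH : H ≤ E := by
    have : Real.log H ≤ 2 * x := by linarith
    calc H = Real.exp (Real.log H) := (Real.exp_log hH0).symm
      _ ≤ E := Real.exp_le_exp.mpr this
  have hAE : H ≤ A * E := by nlinarith [Real.exp_pos (2*x)]
  set g := A * E + H - A with hg
  have hg0 : (0:ℝ) < g := by nlinarith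
  set U := (A * E + B - A) / g with hU
  -- key: C i / g < U for all i
  have hlt : ∀ i, C i / g < U := by
    intro i
    have h1 := (hC i).2
    rw [hU, div_lt_div_iff₀ hg0 hg0]
    nlinarith
  -- rewrite f
  have key : ∀ s : ℝ,
      -(s * U) + Real.log (Real.exp (s * U) + ∑ i : I, Real.exp (s * C i / g))
        = Real.log (1 + ∑ i : I, Real.exp (s * (C i / g - U))) := by
    intro s
    have hpos : 0 < Real.exp (s * U) + ∑ i : I, Real.exp (s * C i / g) := by
      have : 0 ≤ ∑ i : I, Real.exp (s * C i / g) :=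
        Finset.sum_nonneg (fun i _ => (Real.exp_pos _).le)
      positivity
    rw [← Real.log_exp (-(s * U)), ← Real.log_mul (Real.exp_ne_zero _) (ne_of_gt hpos)]
    congr 1
    rw [mul_add, ← Real.exp_add, Finset.mul_sum]
    congr 1
    · simp
    · refine Finset.sum_congr rfl fun i _ => ?_
      rw [← Real.exp_add]
      ring_nf
  intro a b hab
  simp only
  rw [key a, key b]
  have hsum : ∀ s : ℝ, (0:ℝ) < 1 + ∑ i : I, Real.exp (s * (C i / g - U)) := by
    intro s
    have : 0 ≤ ∑ i : I, Real.exp (s * (C i / g - U)) :=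
      Finset.sum_nonneg (fun i _ => (Real.exp_pos _).le)
    linarith
  apply Real.log_lt_log (hsum b)
  have : ∑ i : I, Real.exp (b * (C i / g - U)) < ∑ i : I, Real.exp (a * (C i / g - U)) := by
    apply Finset.sum_lt_sum_of_nonempty Finset.univ_nonempty
    intro i _
    apply Real.exp_lt_exp.mpr
    have hd : C i / g - U < 0 := by linarith [hlt i]
    nlinarith
  linarith
end

section
/- Combined logits of the reparameterized model in the noisy setting (Equation ξ_j = 1{j=y ∨ j=τ}(λ C_{q,y} + 1{j=τ} γ), from Lemma 3): Let d, N ≥ 1, τ = N+1, and let E, Ẽ : {1,…,N+1} → ℝ^d satisfy E(i)ᵀE(j) = 1{i=j}, Ẽ(i)ᵀẼ(j) = 1{i=j}, E(i)ᵀẼ(j) = 0. Let Q ⊆ {1,…,N}, λ, γ ∈ ℝ, U ∈ ℝ^{(N+1)×d} with j-th row E(j)ᵀ, V = I_d, W = λ Σ_{q'∈Q} E(q')(Ẽ(q')ᵀ − E(τ)ᵀ), F = E(τ) Σ_{q'∈Q}( γ E(q')ᵀ + Ẽ(q')ᵀ ). Let z : {0,…,H} → {1,…,N+1} be a sentence with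 x_h = E(z_h) + Ẽ(z_{h−1}), and let q ∈ Q and y ∈ {1,…,N} \ Q with y ≠ τ satisfy: z_H = q; z_{H−1} ∉ Q; for all h ≤ H, z_{h−1} = q implies z_h ∈ {y, τ}; and for all h ≤ H, z_h = τ implies z_{h−1} = q. Then with ξ_A = U Σ_{h=1}^H (x_Hᵀ W x_h) x_h and ξ_F = U F ( x_H + Σ_{h=1}^H (x_Hᵀ W x_h) x_h ), the total logit ξ = ξ_A + ξ_F satisfies, for every j ∈ {1,…,N+1}: ξ_j = λ C_{q,y} if j = y, ξ_j = λ C_{q,y} + γ if j = τ, and ξ_j = 0 otherwise, where C_{q,y} = #{h ∈ {1,…,H} : z_{h−1} = q, z_h = y}. -/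
open Matrix

lemma helper_vmv {d : ℕ} (a b v : Fin d → ℝ) :
    (vecMulVec a b).mulVec v = (b ⬝ᵥ v) • a := by
  ext i
  simp only [vecMulVec, mulVec, dotProduct, Pi.smul_apply, smul_eq_mul, Matrix.of_apply,
    Finset.sum_mul]
  exact Finset.sum_congr rfl fun x _ => by ring

lemma helper_sum_mulVec {d : ℕ} {ι : Type*} (s : Finset ι)
    (M : ι → Matrix (Fin d) (Fin d) ℝ) (v : Fin d → ℝ) :
    (∑ k ∈ s, M k).mulVec v = ∑ k ∈ s, (M k).mulVec v := by
  ext i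
  simp only [mulVec, dotProduct, Matrix.sum_apply, Finset.sum_apply, Finset.sum_mul]
  exact Finset.sum_comm

lemma helper_dot_sum {d : ℕ} {ι : Type*} (s : Finset ι)
    (u : Fin d → ℝ) (w : ι → Fin d → ℝ) :
    u ⬝ᵥ (∑ k ∈ s, w k) = ∑ k ∈ s, u ⬝ᵥ w k := by
  simp only [dotProduct, Finset.sum_apply, Finset.mul_sum]
  exact Finset.sum_comm

lemma helper_sum_dot {d : ℕ} {ι : Type*} (s : Finset ι)
    (u : Fin d → ℝ) (w : ι → Fin d → ℝ) :
    (∑ k ∈ s, w k) ⬝ᵥ u = ∑ k ∈ s, w k ⬝ᵥ u := by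
  simp only [dotProduct, Finset.sum_apply, Finset.sum_mul]
  exact Finset.sum_comm

/-- Combined logits of the reparameterized model in the noisy setting
(equation `ξ_j = 1{j=y ∨ j=τ}(λ C_{q,y} + 1{j=τ} γ)` from Lemma 3). -/
theorem stmt_12 (d N : ℕ) (hd : 0 < d) (hN : 0 < N)
    (E Et : Fin (N + 1) → Fin d → ℝ)
    (hE : ∀ i j, E i ⬝ᵥ E j = if i = j then (1 : ℝ) else 0)
    (hEt : ∀ i j, Et i ⬝ᵥ Et j = if i = j then (1 : ℝ) else 0)
    (hEEt : ∀ i j, E i ⬝ᵥ Et j = 0)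
    (τ : Fin (N + 1)) (hτ : τ = Fin.last N)
    (Q : Finset (Fin (N + 1))) (hQτ : ∀ k ∈ Q, k ≠ τ)
    (lam γ : ℝ)
    (U : Matrix (Fin (N + 1)) (Fin d) ℝ) (hU : ∀ j, U j = E j)
    (W : Matrix (Fin d) (Fin d) ℝ)
    (hW : W = lam • ∑ k ∈ Q, vecMulVec (E k) (Et k - E τ))
    (F : Matrix (Fin d) (Fin d) ℝ)
    (hF : F = vecMulVec (E τ) (∑ k ∈ Q, (γ • E k + Et k)))
    (H : ℕ) (hH : 1 ≤ H) (z : ℕ → Fin (N + 1))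
    (x : ℕ → Fin d → ℝ)
    (hx : ∀ h, 1 ≤ h → h ≤ H → x h = E (z h) + Et (z (h - 1)))
    (q y : Fin (N + 1)) (hq : q ∈ Q) (hy : y ∉ Q) (hyτ : y ≠ τ)
    (hzH : z H = q) (hzH1 : z (H - 1) ∉ Q)
    (hbigram : ∀ h, 1 ≤ h → h ≤ H → z (h - 1) = q → z h = y ∨ z h = τ)
    (hτprev : ∀ h, 1 ≤ h → h ≤ H → z h = τ → z (h - 1) = q) :
    ∀ j : Fin (N + 1),
      (U.mulVec (∑ h ∈ Finset.Icc 1 H, (x H ⬝ᵥ W.mulVec (x h)) • x h)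
        + U.mulVec (F.mulVec
            (x H + ∑ h ∈ Finset.Icc 1 H, (x H ⬝ᵥ W.mulVec (x h)) • x h))) j
      = if j = y then
          lam * (((Finset.Icc 1 H).filter (fun h => z (h - 1) = q ∧ z h = y)).card : ℝ)
        else if j = τ then
          lam * (((Finset.Icc 1 H).filter (fun h => z (h - 1) = q ∧ z h = y)).card : ℝ) + γ
        else 0 := by
  intro j
  have hdcET : ∀ i j, Et i ⬝ᵥ E j = 0 := fun i j => by rw [dotProduct_comm]; exact hEEt j i
  set C : ℕ := ((Finset.Icc 1 H).filter (fun h => z (h - 1) = q ∧ z h = y)).card with hC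
  have hxH : x H = E q + Et (z (H - 1)) := by rw [hx H hH le_rfl, hzH]
  -- attention scores
  have hattn : ∀ h ∈ Finset.Icc 1 H,
      (x H ⬝ᵥ W.mulVec (x h)) = if z (h - 1) = q ∧ z h = y then lam else 0 := by
    intro h hh
    rw [Finset.mem_Icc] at hh
    have hxh := hx h hh.1 hh.2
    rw [hW, smul_mulVec, dotProduct_smul, helper_sum_mulVec, helper_dot_sum]
    have key : ∀ k, x H ⬝ᵥ (vecMulVec (E k) (Et k - E τ)).mulVec (x h)
        = ((if k = z (h - 1) then (1:ℝ) else 0) - (if τ = z h then 1 else 0))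
            * (if q = k then 1 else 0) := by
      intro k
      rw [helper_vmv, dotProduct_smul, smul_eq_mul, hxH, hxh]
      simp only [sub_dotProduct, dotProduct_add, add_dotProduct, hE, hEt, hEEt, hdcET]
      ring
    rw [Finset.sum_congr rfl fun k _ => key k]
    rw [Finset.sum_eq_single_of_mem q hq
      (fun b _ hb => by rw [if_neg (show ¬q = b from fun hc => hb hc.symm), mul_zero]),
      if_pos rfl, mul_one, smul_eq_mul]
    by_cases h1 : z (h - 1) = q
    · rcases hbigram h hh.1 hh.2 h1 with h2 | h2
      · rw [if_pos h1.symm, if_neg (by rw [h2]; exact fun hc => hyτ hc.symm),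
          if_pos ⟨h1, h2⟩]
        ring
      · rw [if_pos h1.symm, if_pos h2.symm,
          if_neg (by rintro ⟨-, h3⟩; exact hyτ (h3.symm.trans h2))]
        ring
    · have h2 : z h ≠ τ := fun hc => h1 (hτprev h hh.1 hh.2 hc)
      rw [if_neg (fun hc => h1 hc.symm), if_neg (fun hc => h2 hc.symm),
        if_neg (by rintro ⟨h3, -⟩; exact h1 h3)]
      ring
  -- the attention output vector
  have hS : (∑ h ∈ Finset.Icc 1 H, (x H ⬝ᵥ W.mulVec (x h)) • x h)
      = ((C : ℝ) * lam) • (E y + Et q) := by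
    have step : ∀ h ∈ Finset.Icc 1 H, (x H ⬝ᵥ W.mulVec (x h)) • x h
        = if z (h - 1) = q ∧ z h = y then lam • (E y + Et q) else 0 := by
      intro h hh
      rw [hattn h hh]
      by_cases hP : z (h - 1) = q ∧ z h = y
      · rw [if_pos hP, if_pos hP]
        rw [Finset.mem_Icc] at hh
        rw [hx h hh.1 hh.2, hP.1, hP.2]
      · rw [if_neg hP, if_neg hP, zero_smul]
    rw [Finset.sum_congr rfl step, ← Finset.sum_filter, Finset.sum_const, ← hC,
      ← Nat.cast_smul_eq_nsmul ℝ, smul_smul]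
  simp only [Pi.add_apply]
  have hUj : ∀ v : Fin d → ℝ, U.mulVec v j = E j ⬝ᵥ v := by
    intro v; rw [Matrix.mulVec, hU]
  rw [hUj, hUj, hS]
  -- first term
  have hA : E j ⬝ᵥ ((C : ℝ) * lam) • (E y + Et q)
      = ((C : ℝ) * lam) * (if j = y then 1 else 0) := by
    rw [dotProduct_smul, smul_eq_mul, dotProduct_add, hE, hEEt, add_zero]
  -- second term
  have hσ : (∑ k ∈ Q, (γ • E k + Et k)) ⬝ᵥ (x H + ((C : ℝ) * lam) • (E y + Et q))
      = γ + (C : ℝ) * lam := by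
    rw [helper_sum_dot]
    have key : ∀ k ∈ Q, (γ • E k + Et k) ⬝ᵥ (x H + ((C : ℝ) * lam) • (E y + Et q))
        = if q = k then γ + (C : ℝ) * lam else 0 := by
      intro k hk
      rw [hxH]
      simp only [add_dotProduct, smul_dotProduct, dotProduct_add, dotProduct_smul,
        hE, hEt, hEEt, hdcET, smul_eq_mul]
      have hky : (if k = y then (1:ℝ) else 0) = 0 := by
        rw [if_neg]; exact fun hc => hy (hc ▸ hk)
      have hkz : (if k = z (H - 1) then (1:ℝ) else 0) = 0 := by
        rw [if_neg]; exact fun hc => hzH1 (hc ▸ hk)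
      rw [hky, hkz]
      by_cases hkq : q = k
      · rw [if_pos hkq.symm, if_pos hkq]; ring
      · rw [if_neg (fun hc => hkq hc.symm), if_neg hkq]; ring
    rw [Finset.sum_congr rfl key,
      Finset.sum_eq_single_of_mem q hq (fun b _ hb => if_neg (fun hc => hb hc.symm)),
      if_pos rfl]
  rw [hF, helper_vmv, hA, dotProduct_smul, smul_eq_mul, hσ, hE]
  by_cases hjy : j = y
  · rw [if_pos hjy, if_pos hjy, if_neg (hjy ▸ hyτ)]
    ring
  · rw [if_neg hjy, if_neg hjy]
    by_cases hjτ : j = τ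
    · rw [if_pos hjτ, if_pos hjτ]
      ring
    · rw [if_neg hjτ, if_neg hjτ]
      ring
end

section
/- Finite-sample convergence to the Bayes risk, deterministic core of Theorem 5: Let N ≥ 1 be an integer, α ∈ [0,1], α̂ ∈ (0,1), C ≥ 1 and λ ≥ 0 be real numbers. Then −Cλ + ln( exp(Cλ)/(1−α̂) + N − 1 ) − α ln( α̂/(1−α̂) ) ≤ −α ln α̂ − (1−α) ln(1−α̂) + (N−1) e^{−λ}. In particular, since −α ln α̂ − (1−α) ln(1−α̂) = [−α ln α − (1−α) ln(1−α)] + [α ln(α/α̂) + (1−α) ln((1−α)/(1−α̂))] when α ∈ (0,1), the population loss is at most the Bayes risk plus the Bernoulli KL divergence KL(α‖α̂) plus (N−1)e^{−λ}. -/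
/-! The log-sum-exp term is linearised at its dominant summand: `log (a + b) ≤ log a + b / a`
with `a = exp (Cλ) / (1 - α̂)` turns the loss into the cross entropy of `α` against `α̂` plus
`(N - 1)(1 - α̂) e^{-Cλ} ≤ (N - 1) e^{-λ}`. The second claim is the usual splitting of a cross
entropy into entropy plus KL divergence. -/

open Real

lemma Real.log_add_le_log_add_div {a b : ℝ} (ha : 0 < a) (hab : 0 < a + b) :
    log (a + b) ≤ log a + b / a := by
  have h := log_le_sub_one_of_pos (div_pos hab ha)
  rw [log_div hab.ne' ha.ne', add_div, div_self ha.ne'] at h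
  linarith

lemma Real.neg_add_log_exp_div_add_le {t p B : ℝ} (hp : 0 < p) (hB : 0 ≤ B) :
    -t + log (exp t / p + B) ≤ -log p + B * p * exp (-t) := by
  have ha : 0 < exp t / p := div_pos (exp_pos t) hp
  have hlog : log (exp t / p) = t - log p := by
    rw [log_div (exp_ne_zero t) hp.ne', log_exp]
  have hdiv : B / (exp t / p) = B * p * exp (-t) := by
    rw [exp_neg]
    field_simp
  have h := log_add_le_log_add_div (b := B) ha (by linarith)
  rw [hlog, hdiv] at h
  linarith

lemma Real.crossEntropy_eq_entropy_add_klDiv {α β : ℝ} (hα₀ : α ≠ 0) (hα₁ : 1 - α ≠ 0)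
    (hβ₀ : β ≠ 0) (hβ₁ : 1 - β ≠ 0) :
    -(α * log β) - (1 - α) * log (1 - β)
      = (-(α * log α) - (1 - α) * log (1 - α))
        + (α * log (α / β) + (1 - α) * log ((1 - α) / (1 - β))) := by
  rw [log_div hα₀ hβ₀, log_div hα₁ hβ₁]
  ring

theorem stmt_15_general (N : ℕ) (hN : 1 ≤ N) (α αhat C lam : ℝ)
    (hαhat : αhat ∈ Set.Ioo (0 : ℝ) 1)
    (hC : 1 ≤ C) (hlam : 0 ≤ lam) :
    (-(C * lam) + Real.log (Real.exp (C * lam) / (1 - αhat) + ((N : ℝ) - 1))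
        - α * Real.log (αhat / (1 - αhat))
      ≤ -(α * Real.log αhat) - (1 - α) * Real.log (1 - αhat)
          + ((N : ℝ) - 1) * Real.exp (-lam)) ∧
    (α ∈ Set.Ioo (0 : ℝ) 1 →
      -(α * Real.log αhat) - (1 - α) * Real.log (1 - αhat)
        = (-(α * Real.log α) - (1 - α) * Real.log (1 - α))
          + (α * Real.log (α / αhat) + (1 - α) * Real.log ((1 - α) / (1 - αhat)))) := by
  obtain ⟨hαhat₀, hαhat₁⟩ := hαhat
  have hB : (0 : ℝ) ≤ N - 1 := by
    have : (1 : ℝ) ≤ N := by exact_mod_cast hN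
    linarith
  refine ⟨?_, fun ⟨hα₀, hα₁⟩ ↦
    crossEntropy_eq_entropy_add_klDiv hα₀.ne' (by linarith) hαhat₀.ne' (by linarith)⟩
  have hloss := neg_add_log_exp_div_add_le (t := C * lam) (sub_pos.2 hαhat₁) hB
  have hexp : exp (-(C * lam)) ≤ exp (-lam) := exp_le_exp.2 (by nlinarith)
  have htail : ((N : ℝ) - 1) * (1 - αhat) * exp (-(C * lam)) ≤ ((N : ℝ) - 1) * exp (-lam) := by
    rw [mul_assoc]
    refine mul_le_mul_of_nonneg_left ?_ hB
    calc (1 - αhat) * exp (-(C * lam)) ≤ 1 * exp (-lam) :=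
          mul_le_mul (by linarith) hexp (exp_pos _).le zero_le_one
      _ = exp (-lam) := one_mul _
  rw [log_div hαhat₀.ne' (sub_pos.2 hαhat₁).ne']
  linarith

/-- Finite-sample convergence to the Bayes risk, deterministic core of Theorem 5:
the population loss with the plug-in estimate `α̂` is at most
`−α ln α̂ − (1−α) ln(1−α̂) + (N−1)e^{−λ}`, and for `α ∈ (0,1)` the latter cross
entropy decomposes as Bayes risk plus the Bernoulli KL divergence `KL(α‖α̂)`. -/
theorem stmt_15 (N : ℕ) (hN : 1 ≤ N) (α αhat C lam : ℝ)
    (hα : α ∈ Set.Icc (0 : ℝ) 1) (hαhat : αhat ∈ Set.Ioo (0 : ℝ) 1)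
    (hC : 1 ≤ C) (hlam : 0 ≤ lam) :
    (-(C * lam) + Real.log (Real.exp (C * lam) / (1 - αhat) + ((N : ℝ) - 1))
        - α * Real.log (αhat / (1 - αhat))
      ≤ -(α * Real.log αhat) - (1 - α) * Real.log (1 - αhat)
          + ((N : ℝ) - 1) * Real.exp (-lam)) ∧
    (α ∈ Set.Ioo (0 : ℝ) 1 →
      -(α * Real.log αhat) - (1 - α) * Real.log (1 - αhat)
        = (-(α * Real.log α) - (1 - α) * Real.log (1 - α))
          + (α * Real.log (α / αhat) + (1 - α) * Real.log ((1 - α) / (1 - αhat)))) :=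
  stmt_15_general N hN α αhat C lam hαhat hC hlam
end
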